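/- arXiv:1810.12381 — 3 statements merged into one kernel-verified Lean document; each statement's English description precedes it below -/
import Mathlib

section
/- Let I, J ⊆ [0,∞) be sets satisfying the descending chain condition and let c > 0 be a real number. Then the set 𝒟_c(I;J) satisfies the descending chain condition. -/
open Filter

/-- A set of reals satisfies the descending chain condition (DCC) if it contains
no infinite strictly decreasing sequence. -/
def DCC (S : Set ℝ) : Prop := ¬ ∃ f : ℕ → ℝ, StrictAnti f ∧ ∀ n, f n ∈ S

/-- A set of reals satisfies the ascending chain condition (ACC) if it contains
no infinite strictly increasing sequence. -/
def ACC (S : Set ℝ) : Prop := ¬ ∃ f : ℕ → ℝ, StrictMono f ∧ ∀ n, f n ∈ S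

/-- `x` is an accumulation point of `S` if every neighborhood of `x` contains a
point of `S` different from `x`. -/
def IsAccPt (x : ℝ) (S : Set ℝ) : Prop := ∀ ε > 0, ∃ y ∈ S, y ≠ x ∧ |y - x| < ε

/-- The set `∂S` of accumulation points of `S` in `ℝ`. -/
def accPts (S : Set ℝ) : Set ℝ := {x | IsAccPt x S}

/-- The set of all (nonempty) finite sums of elements of `I`. -/
def finSums (I : Set ℝ) : Set ℝ :=
  {x | ∃ l : ℕ, 0 < l ∧ ∃ g : Fin l → ℝ, (∀ p, g p ∈ I) ∧ x = ∑ p, g p}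

/-- `I₊ = {0} ∪ { x ∈ [0,1] : x is a nonempty finite sum of elements of I }`. -/
def plusSet (I : Set ℝ) : Set ℝ := {0} ∪ (Set.Icc 0 1 ∩ finSums I)

/-- `D(I) = { a ≤ 1 : a = (m - 1 + f)/m, m ∈ ℕ⁺, f ∈ I₊ }`. -/
def DSet (I : Set ℝ) : Set ℝ :=
  {a | a ≤ 1 ∧ ∃ m : ℕ, 0 < m ∧ ∃ f ∈ plusSet I, a = ((m : ℝ) - 1 + f) / m}

/-- `𝒟_c(I;J) = { a ≤ 1 : a = (m - 1 + f + kc)/m, m ∈ ℕ⁺, f ∈ I₊,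
k a nonzero finite sum of elements of J }`. -/
def DcSet (I J : Set ℝ) (c : ℝ) : Set ℝ :=
  {a | a ≤ 1 ∧ ∃ m : ℕ, 0 < m ∧ ∃ f ∈ plusSet I, ∃ k ∈ finSums J, k ≠ 0 ∧
    a = ((m : ℝ) - 1 + f + k * c) / m}

/-- The closure `S̄ = S ∪ ∂S` of `S` in `ℝ`. -/
def clSet (S : Set ℝ) : Set ℝ := S ∪ accPts S

/-!
Write `a ∈ 𝒟_c(I;J)` as `a = (m - 1 + t)/m` with `t = f + c k` in `T := I₊ + c • ΣJ`. The set `T`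
is well-ordered: finite sums of a well-ordered set of nonnegative reals are well-ordered, and so
are sums of two well-ordered sets. Since `m (1 - a) = 1 - t ≤ 1`, below any level `b < 1` only
the finitely many `m ≤ 1/(1 - b)` occur, so `𝒟_c(I;J) ∩ (-∞, b]` is a finite union of monotone
images of `T`. A descending chain in `𝒟_c(I;J) ⊆ (-∞, 1]` eventually lies below such a level.
-/

open Pointwise

lemma dcc_iff_isWF (S : Set ℝ) : DCC S ↔ S.IsWF := by
  simp only [Set.isWF_iff_no_descending_seq, DCC, not_exists, not_and]

lemma Set.isWF_of_forall_lt_isWF_inter_Iic {α : Type*} [Preorder α] {S : Set α} {u : α}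
    (hS : S ⊆ Set.Iic u) (h : ∀ b < u, (S ∩ Set.Iic b).IsWF) : S.IsWF := by
  rw [Set.isWF_iff_no_descending_seq]
  intro f hf hfS
  have hlt : f 1 < u := (hf zero_lt_one).trans_le (hS (hfS 0))
  refine Set.isWF_iff_no_descending_seq.1 (h (f 1) hlt) (fun n => f (n + 1))
    (hf.comp_strictMono fun _ _ h => Nat.add_lt_add_right h 1) fun n => ⟨hfS _, ?_⟩
  exact hf.antitone (Nat.le_add_left 1 n)

lemma finSums_subset_addSubmonoidClosure (J : Set ℝ) :
    finSums J ⊆ AddSubmonoid.closure J := by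
  rintro x ⟨l, -, g, hg, rfl⟩
  exact AddSubmonoid.sum_mem _ fun p _ => AddSubmonoid.subset_closure (hg p)

lemma finSums_nonneg {J : Set ℝ} (hJ0 : J ⊆ Set.Ici 0) {x : ℝ} (hx : x ∈ finSums J) : 0 ≤ x := by
  obtain ⟨l, -, g, hg, rfl⟩ := hx
  exact Finset.sum_nonneg fun p _ => hJ0 (hg p)

lemma plusSet_nonneg {I : Set ℝ} {x : ℝ} (hx : x ∈ plusSet I) : 0 ≤ x := by
  rcases hx with rfl | ⟨⟨h, -⟩, -⟩
  exacts [le_rfl, h]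

lemma Set.IsPWO.finSums {J : Set ℝ} (hJ0 : J ⊆ Set.Ici 0) (hJ : J.IsPWO) :
    (finSums J).IsPWO :=
  (hJ.addSubmonoid_closure fun _ hx => hJ0 hx).mono (finSums_subset_addSubmonoidClosure J)

lemma Set.IsPWO.plusSet {I : Set ℝ} (hI0 : I ⊆ Set.Ici 0) (hI : I.IsPWO) :
    (plusSet I).IsPWO := by
  refine ((hI.finSums hI0).insert 0).mono ?_
  rintro x (rfl | ⟨-, hx⟩)
  exacts [Set.mem_insert _ _, Set.mem_insert_of_mem _ hx]

lemma DcSet_inter_Iic_subset {I J : Set ℝ} {c b : ℝ} (hJ0 : J ⊆ Set.Ici 0) (hc : 0 ≤ c)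
    (hb : b < 1) :
    DcSet I J c ∩ Set.Iic b ⊆ ⋃ m ∈ Finset.range (⌊1 / (1 - b)⌋₊ + 1),
      (fun t => ((m : ℝ) - 1 + t) / m) '' (plusSet I + c • finSums J) := by
  rintro a ⟨⟨-, m, hm, f, hf, k, hk, -, ha⟩, hab⟩
  have hmb : (m : ℝ) * (1 - b) ≤ 1 :=
    calc (m : ℝ) * (1 - b) ≤ m * (1 - a) := by gcongr; exact hab
      _ = 1 - (f + k * c) := by rw [ha]; field_simp; ring
      _ ≤ 1 := by
        linarith [plusSet_nonneg hf, mul_nonneg (finSums_nonneg hJ0 hk) hc]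
  refine Set.mem_biUnion (x := m) ?_ ⟨f + c • k, Set.add_mem_add hf (Set.smul_mem_smul_set hk), ?_⟩
  · rw [Finset.coe_range, Set.mem_Iio, Nat.lt_succ_iff]
    exact Nat.le_floor ((le_div_iff₀ (sub_pos.2 hb)).2 hmb)
  · rw [ha, smul_eq_mul, mul_comm c k, add_assoc]

/-- If `I, J ⊆ [0,∞)` satisfy the DCC and `c > 0`, then `𝒟_c(I;J)` satisfies
the DCC. -/
theorem dcc_DcSet (I J : Set ℝ) (hI0 : I ⊆ Set.Ici 0) (hJ0 : J ⊆ Set.Ici 0)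
    (hI : DCC I) (hJ : DCC J) (c : ℝ) (hc : 0 < c) :
    DCC (DcSet I J c) := by
  have hT : (plusSet I + c • finSums J).IsPWO := by
    refine (((dcc_iff_isWF I).1 hI).isPWO.plusSet hI0).add ?_
    rw [← Set.image_smul]
    exact (((dcc_iff_isWF J).1 hJ).isPWO.finSums hJ0).image_of_monotone
      fun _ _ h => mul_le_mul_of_nonneg_left h hc.le
  rw [dcc_iff_isWF]
  refine Set.isWF_of_forall_lt_isWF_inter_Iic (u := 1) (fun a ha => ha.1) fun b hb => ?_
  refine ((Finset.isWF_bUnion _).2 fun m _ => (hT.image_of_monotone ?_).isWF).mono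
    (DcSet_inter_Iic_subset hJ0 hc.le hb)
  exact fun _ _ h => div_le_div_of_nonneg_right (by linarith) (Nat.cast_nonneg m)
end

section
/- Let J ⊆ [0,∞) be a set with no accumulation point in ℝ. Then the set {0} ∪ { x ∈ ℝ : x = j₁ + ⋯ + j_l for some l ∈ ℕ⁺ and j₁, …, j_l ∈ J } of all finite sums of elements of J also has no accumulation point in ℝ. -/
open Filter

/-!
Elements of `J` below a bound `M` are finitely many, and the nonzero ones are at least some
`δ > 0`; a sum of elements of `J` that is at most `M` therefore uses at most `M / δ` nonzero
terms, all from that finite set, so it takes only finitely many values. In `ℝ`, having no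
accumulation point is the same as meeting every compact set in a finite set.
-/

open Set Topology

theorem isAccPt_iff_accPt {x : ℝ} {S : Set ℝ} : IsAccPt x S ↔ AccPt x (𝓟 S) := by
  simp only [accPt_iff_frequently, Metric.nhds_basis_ball.frequently_iff, Metric.mem_ball,
    Real.dist_eq, IsAccPt]
  exact forall₂_congr fun ε _ => ⟨fun ⟨y, hyS, hyx, hy⟩ => ⟨y, hy, hyx, hyS⟩,
    fun ⟨y, hy, hyx, hyS⟩ => ⟨y, hyS, hyx, hy⟩⟩

theorem forall_not_accPt_iff_forall_isCompact_finite {X : Type*} [TopologicalSpace X]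
    [T1Space X] [WeaklyLocallyCompactSpace X] {s : Set X} :
    (∀ x, ¬AccPt x (𝓟 s)) ↔ ∀ K, IsCompact K → (s ∩ K).Finite := by
  constructor
  · intro h K hK
    by_contra hinf
    obtain ⟨x, -, hx⟩ := Set.Infinite.exists_accPt_of_subset_isCompact hinf hK inter_subset_right
    exact h x (hx.mono (principal_mono.2 inter_subset_left))
  · intro h x hx
    obtain ⟨K, hK, hKx⟩ := exists_compact_mem_nhds x
    exact Set.Infinite.of_accPt (hx.nhds_inter hKx) (inter_comm s K ▸ h K hK)

theorem Set.Finite.exists_pos_forall_le {F : Set ℝ} (hF : F.Finite) (hpos : F ⊆ Ioi 0) :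
    ∃ δ > 0, ∀ y ∈ F, δ ≤ y := by
  obtain ⟨δ, hδ, hmin⟩ := (insert 1 F).exists_min_image id (hF.insert 1) (insert_nonempty 1 F)
  refine ⟨δ, ?_, fun y hy => hmin y (mem_insert_of_mem 1 hy)⟩
  rcases hδ with rfl | hδ
  exacts [one_pos, hpos hδ]

theorem finite_addSubmonoidClosure_inter_Iic_of_pos {P : Set ℝ} {M : ℝ} (hP : P ⊆ Ioi 0)
    (hPM : (P ∩ Iic M).Finite) :
    ((AddSubmonoid.closure P : Set ℝ) ∩ Iic M).Finite := by
  classical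
  obtain ⟨δ, hδ, hδle⟩ := hPM.exists_pos_forall_le (inter_subset_left.trans hP)
  set F := hPM.toFinset
  set N := ⌈M / δ⌉₊
  refine ((Set.finite_Icc 0 (N • F.val)).image Multiset.sum).subset ?_
  rintro x ⟨hx, hxM⟩
  obtain ⟨l, hlP, rfl⟩ := AddSubmonoid.exists_multiset_of_mem_closure hx
  have hlF : ∀ y ∈ l, y ∈ P ∩ Iic M := fun y hy =>
    ⟨hlP y hy, (Multiset.single_le_sum (fun z hz => (hP (hlP z hz)).le) y hy).trans hxM⟩
  have hcard : Multiset.card l ≤ N := by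
    have : (Multiset.card l : ℝ) * δ ≤ M := by
      simpa using (Multiset.card_nsmul_le_sum fun y hy => hδle y (hlF y hy)).trans hxM
    exact_mod_cast ((le_div_iff₀ hδ).2 this).trans (Nat.le_ceil _)
  refine ⟨l, ⟨Multiset.zero_le _, Multiset.le_iff_count.2 fun y => ?_⟩, rfl⟩
  by_cases hy : y ∈ l
  · rw [Multiset.count_nsmul, Multiset.count_eq_one_of_mem F.nodup (by simpa [F] using hlF y hy),
      mul_one]
    exact (Multiset.count_le_card _ _).trans hcard
  · simp [Multiset.count_eq_zero.2 hy]

theorem finite_addSubmonoidClosure_inter_Iic {J : Set ℝ} {M : ℝ} (hJ0 : J ⊆ Ici 0)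
    (hJM : (J ∩ Iic M).Finite) :
    ((AddSubmonoid.closure J : Set ℝ) ∩ Iic M).Finite := by
  have hpos : J \ {0} ⊆ Ioi 0 := fun y hy => lt_of_le_of_ne (hJ0 hy.1) (Ne.symm hy.2)
  have hclosure : AddSubmonoid.closure J ≤ AddSubmonoid.closure (J \ {0}) := by
    rw [← AddSubmonoid.closure_insert_zero (J \ {0})]
    exact AddSubmonoid.closure_mono (subset_insert_sdiff_singleton 0 J)
  exact (finite_addSubmonoidClosure_inter_Iic_of_pos hpos
    (hJM.subset (inter_subset_inter_left _ sdiff_subset))).subset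
    (inter_subset_inter_left _ hclosure)

theorem zero_union_finSums_subset_closure (J : Set ℝ) :
    {0} ∪ finSums J ⊆ AddSubmonoid.closure J := by
  rintro x (rfl | ⟨l, -, g, hg, rfl⟩)
  · exact zero_mem _
  · exact sum_mem fun p _ => AddSubmonoid.subset_closure (hg p)

/-- If `J ⊆ [0,∞)` has no accumulation point in `ℝ`, then the set of all finite
sums of elements of `J` (together with `0`) has no accumulation point in `ℝ`. -/
theorem no_accPt_finSums (J : Set ℝ) (hJ0 : J ⊆ Set.Ici 0)
    (hJ : ∀ x, ¬ IsAccPt x J) :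
    ∀ x, ¬ IsAccPt x ({0} ∪ finSums J) := by
  simp only [isAccPt_iff_accPt, forall_not_accPt_iff_forall_isCompact_finite] at hJ ⊢
  intro K hK
  obtain ⟨M, hM⟩ := hK.bddAbove
  have hJM : (J ∩ Iic M).Finite := (hJ (Icc 0 M) isCompact_Icc).subset
    fun y ⟨hyJ, hyM⟩ => ⟨hyJ, hJ0 hyJ, hyM⟩
  exact (finite_addSubmonoidClosure_inter_Iic hJ0 hJM).subset
    (inter_subset_inter (zero_union_finSums_subset_closure J) hM)
end

section
/- Let I ⊆ [0,∞) be a set satisfying the descending chain condition whose set ∂I of accumulation points in ℝ is finite. Then there exists an integer m ≥ 0 such that the m-th iterated accumulation point set ∂^m(I₊) is empty; that is, I₊ has no accumulation points of arbitrarily high order. -/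
open Filter

/-
Nonzero elements of `I` are at least some `δ > 0` (by the DCC), so an element of
`I₊ ⊆ [0, 1]` is a sum of at most `N = ⌈1/δ⌉` elements of `J = {0} ∪ (I ∩ [0, 1])`,
i.e. `I₊ ⊆ N • J`. For bounded sets the Cantor–Bendixson rank is subadditive under
Minkowski sums, because `∂(A + B) ⊆ (∂A + B̄) ∪ (Ā + ∂B)`. Since `∂²J = ∅` (as `∂I` is
finite), this gives `∂^(2N+1)(N • J) = ∅`.
-/

open Topology Set Pointwise

section

variable {X : Type*} [TopologicalSpace X]

theorem derivedSet_eq_empty_of_finite [T1Space X] {S : Set X} (hS : S.Finite) :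
    derivedSet S = ∅ :=
  eq_empty_of_forall_notMem fun _ hx ↦ Infinite.of_accPt hx hS

theorem iterate_derivedSet_empty [T1Space X] (n : ℕ) : derivedSet^[n] (∅ : Set X) = ∅ :=
  Function.iterate_fixed (derivedSet_eq_empty_of_finite finite_empty) n

theorem derivedSet_insert [T1Space X] (a : X) (S : Set X) :
    derivedSet (insert a S) = derivedSet S := by
  rw [insert_eq, derivedSet_union, derivedSet_eq_empty_of_finite (finite_singleton a),
    empty_union]

theorem iterate_derivedSet_union (n : ℕ) (A B : Set X) :
    derivedSet^[n] (A ∪ B) = derivedSet^[n] A ∪ derivedSet^[n] B := by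
  induction n generalizing A B with
  | zero => rfl
  | succ n ih => simp only [Function.iterate_succ_apply, derivedSet_union, ih]

theorem monotone_derivedSet : Monotone (derivedSet : Set X → Set X) := derivedSet_mono

variable [Add X] [ContinuousAdd X] [T2Space X]

theorem derivedSet_add_subset {A B : Set X} (hA : IsCompact (closure A))
    (hB : IsCompact (closure B)) :
    derivedSet (A + B) ⊆ (derivedSet A + closure B) ∪ (closure A + derivedSet B) := by
  intro x hx
  -- `G` lives on the pairs `(y, z) ∈ A × B` with `y + z ≠ x` tending to `x`; a cluster point
  -- `(a, b)` of `G` has `a + b = x`, and `a`, `b` cannot both be isolated in `A`, `B`.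
  set F := 𝓝[≠] x ⊓ 𝓟 (A + B)
  have hF : NeBot F := hx
  set G := comap (fun p : X × X ↦ p.1 + p.2) F ⊓ 𝓟 (A ×ˢ B)
  have hG : NeBot G := comap_inf_principal_neBot_of_image_mem hF
    (by rw [add_image_prod]; exact mem_inf_of_right (mem_principal_self _))
  obtain ⟨⟨a, b⟩, ⟨ha, hb⟩, hab⟩ : ∃ p ∈ closure A ×ˢ closure B, ClusterPt p G :=
    (hA.prod hB) (inf_le_right.trans (principal_mono.2 (prod_mono subset_closure subset_closure)))
  have hsum : a + b = x := by
    have : ClusterPt (a + b) F :=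
      hab.map continuous_add.continuousAt (tendsto_comap.mono_left inf_le_left)
    exact eq_of_nhds_neBot (this.mono (inf_le_left.trans nhdsWithin_le_nhds))
  subst hsum
  by_contra h
  have ha' : a ∉ derivedSet A := fun h' ↦ h (Or.inl (add_mem_add h' hb))
  have hb' : b ∉ derivedSet B := fun h' ↦ h (Or.inr (add_mem_add ha h'))
  simp only [mem_derivedSet, accPt_iff_nhds, not_forall, not_exists, not_and, not_not] at ha' hb'
  obtain ⟨U, hU, hUA⟩ := ha'
  obtain ⟨V, hV, hVB⟩ := hb'
  have hne : (fun p : X × X ↦ p.1 + p.2) ⁻¹' {a + b}ᶜ ∩ A ×ˢ B ∈ G :=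
    inter_mem_inf (preimage_mem_comap (mem_inf_of_left self_mem_nhdsWithin))
      (mem_principal_self _)
  obtain ⟨⟨y, z⟩, ⟨hyU, hzV⟩, hyz, hyA, hzB⟩ := clusterPt_iff_nonempty.1 hab
    (prod_mem_nhds hU hV) hne
  exact hyz (by rw [hUA y ⟨hyU, hyA⟩, hVB z ⟨hzV, hzB⟩]; rfl)

theorem iterate_derivedSet_add_eq_empty {K L A B : Set X} (hK : IsCompact K) (hL : IsCompact L)
    (hAK : A ⊆ K) (hBL : B ⊆ L) {i j : ℕ} (hA : derivedSet^[i] A = ∅)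
    (hB : derivedSet^[j] B = ∅) : derivedSet^[i + j] (A + B) = ∅ := by
  induction hn : i + j using Nat.strong_induction_on generalizing i j A B with | _ n ih
  subst hn
  rcases i with _ | i
  · obtain rfl : A = ∅ := hA
    rw [empty_add, iterate_derivedSet_empty]
  rcases j with _ | j
  · obtain rfl : B = ∅ := hB
    rw [add_empty, iterate_derivedSet_empty]
  have hAK' : closure A ⊆ K := hK.isClosed.closure_subset_iff.2 hAK
  have hBL' : closure B ⊆ L := hL.isClosed.closure_subset_iff.2 hBL
  have h₁ : derivedSet^[i + (j + 1)] (derivedSet A + closure B) = ∅ :=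
    ih _ (by omega) ((derivedSet_subset_closure A).trans hAK') hBL' hA
      (by rwa [Function.iterate_succ_apply, derivedSet_closure]) rfl
  have h₂ : derivedSet^[i + (j + 1)] (closure A + derivedSet B) = ∅ :=
    ih _ (by omega) hAK' ((derivedSet_subset_closure B).trans hBL')
      (by rwa [Function.iterate_succ_apply, derivedSet_closure]) hB (by omega)
  rw [show i + 1 + (j + 1) = i + (j + 1) + 1 by omega, Function.iterate_succ_apply]
  refine subset_empty_iff.1 ((monotone_derivedSet.iterate _ (derivedSet_add_subset
    (hK.closure_of_subset hAK) (hL.closure_of_subset hBL))).trans ?_)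
  rw [iterate_derivedSet_union, h₁, h₂, union_empty]

end

section

variable {X : Type*} [TopologicalSpace X] [AddMonoid X] [ContinuousAdd X]

theorem IsCompact.nsmul {K : Set X} (hK : IsCompact K) (n : ℕ) : IsCompact (n • K) := by
  induction n with
  | zero => simp
  | succ n ih => rw [succ_nsmul]; exact ih.add hK

variable [T2Space X]

theorem iterate_derivedSet_nsmul_eq_empty {K J : Set X} (hK : IsCompact K) (hJK : J ⊆ K) {k : ℕ}
    (hJ : derivedSet^[k] J = ∅) (n : ℕ) : derivedSet^[k * n + 1] (n • J) = ∅ := by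
  induction n with
  | zero =>
    rw [zero_nsmul, ← singleton_zero]
    exact derivedSet_eq_empty_of_finite (finite_singleton 0)
  | succ n ih =>
    rw [succ_nsmul, show k * (n + 1) + 1 = (k * n + 1) + k by ring]
    exact iterate_derivedSet_add_eq_empty (hK.nsmul n) hK (nsmul_subset_nsmul_left hJK) hJK ih hJ

end

theorem Set.finsetSum_mem_card_nsmul {ι M : Type*} [AddCommMonoid M] {s : Finset ι} {f : ι → M}
    {J : Set M} (hf : ∀ i ∈ s, f i ∈ J) : ∑ i ∈ s, f i ∈ s.card • J := by
  rw [← Finset.sum_const]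
  exact (mem_finsetSum s (fun _ ↦ J) _).2 ⟨f, fun hi ↦ hf _ hi, rfl⟩

theorem accPts_eq_derivedSet : accPts = derivedSet (X := ℝ) := by
  ext S x
  simp only [accPts, IsAccPt, mem_derivedSet, accPt_iff_nhds, ← Real.dist_eq]
  constructor
  · intro h U hU
    obtain ⟨ε, hε, hεU⟩ := Metric.mem_nhds_iff.1 hU
    obtain ⟨y, hyS, hyx, hy⟩ := h ε hε
    exact ⟨y, ⟨hεU hy, hyS⟩, hyx⟩
  · intro h ε hε
    obtain ⟨y, ⟨hy, hyS⟩, hyx⟩ := h _ (Metric.ball_mem_nhds x hε)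
    exact ⟨y, hyS, hyx, hy⟩

theorem DCC.isWF {S : Set ℝ} (hS : DCC S) : S.IsWF :=
  isWF_iff_no_descending_seq.2 fun f hf hfS ↦ hS ⟨f, hf, hfS⟩

theorem Set.IsWF.exists_pos_le {I : Set ℝ} (hI : I.IsWF) : ∃ δ > 0, ∀ x ∈ I, 0 < x → δ ≤ x := by
  rcases (I ∩ Ioi 0).eq_empty_or_nonempty with h | h
  · exact ⟨1, one_pos, fun x hx hx0 ↦ absurd h (Nonempty.ne_empty ⟨x, hx, hx0⟩)⟩
  · have hwf : (I ∩ Ioi 0).IsWF := hI.mono inter_subset_left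
    exact ⟨hwf.min h, (hwf.min_mem h).2, fun x hx hx0 ↦ hwf.min_le h ⟨hx, hx0⟩⟩

theorem plusSet_subset_nsmul {I : Set ℝ} (hI0 : I ⊆ Ici 0) {δ : ℝ} (hδ : 0 < δ)
    (hδI : ∀ x ∈ I, 0 < x → δ ≤ x) : plusSet I ⊆ ⌈δ⁻¹⌉₊ • insert 0 (I ∩ Iic 1) := by
  rintro x (rfl | ⟨⟨-, hx1⟩, l, -, g, hg, rfl⟩)
  · exact zero_mem_nsmul (mem_insert 0 _)
  have hg0 (p : Fin l) : 0 ≤ g p := hI0 (hg p)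
  have hg1 (p : Fin l) : g p ≤ 1 :=
    (Finset.single_le_sum (fun q _ ↦ hg0 q) (Finset.mem_univ p)).trans hx1
  set s := Finset.univ.filter fun p ↦ g p ≠ 0
  rw [← Finset.sum_filter_ne_zero]
  have hcard : s.card ≤ ⌈δ⁻¹⌉₊ := by
    have : (s.card : ℝ) ≤ δ⁻¹ := by
      rw [← one_div, le_div_iff₀ hδ]
      calc
        s.card * δ = s.card • δ := (nsmul_eq_mul _ _).symm
        _ ≤ ∑ p ∈ s, g p := Finset.card_nsmul_le_sum _ _ _ fun p hp ↦
          hδI _ (hg p) ((hg0 p).lt_of_ne' (Finset.mem_filter.1 hp).2)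
        _ ≤ 1 := by rwa [Finset.sum_filter_ne_zero]
    exact Nat.cast_le.1 (this.trans (Nat.le_ceil _))
  exact nsmul_subset_nsmul_right (mem_insert 0 _) hcard
    (finsetSum_mem_card_nsmul fun p _ ↦ mem_insert_of_mem 0 ⟨hg p, hg1 p⟩)

/-- If `I ⊆ [0,∞)` satisfies the DCC and `∂I` is finite, then some iterated
accumulation point set `∂^m(I₊)` is empty. -/
theorem iterated_accPts_empty (I : Set ℝ) (hI0 : I ⊆ Set.Ici 0) (hI : DCC I)
    (hfin : (accPts I).Finite) :
    ∃ m : ℕ, accPts^[m] (plusSet I) = ∅ := by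
  rw [accPts_eq_derivedSet] at hfin ⊢
  obtain ⟨δ, hδ, hδI⟩ := hI.isWF.exists_pos_le
  have hJ : insert 0 (I ∩ Iic 1) ⊆ Icc 0 1 :=
    insert_subset ⟨le_rfl, zero_le_one⟩ fun x hx ↦ ⟨hI0 hx.1, hx.2⟩
  have hJ₂ : derivedSet^[2] (insert 0 (I ∩ Iic 1)) = ∅ := by
    refine subset_empty_iff.1 ?_
    calc derivedSet (derivedSet (insert 0 (I ∩ Iic 1)))
        = derivedSet (derivedSet (I ∩ Iic 1)) := by rw [derivedSet_insert]
      _ ⊆ derivedSet (derivedSet I) := monotone_derivedSet.iterate 2 inter_subset_left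
      _ = ∅ := derivedSet_eq_empty_of_finite hfin
  refine ⟨2 * ⌈δ⁻¹⌉₊ + 1, subset_empty_iff.1 ?_⟩
  exact (monotone_derivedSet.iterate _ (plusSet_subset_nsmul hI0 hδ hδI)).trans
    (iterate_derivedSet_nsmul_eq_empty isCompact_Icc hJ hJ₂ _).subset
end
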